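/- arXiv:1612.09252 — 8 statements merged into one kernel-verified Lean document; each statement's English description precedes it below -/
import Mathlib

section
/- If X is a non-negative real random variable with mean μ > 0, then for every measurable subset E of ℝ, E[log((1+μ)/(1+X)) · 1_E(X)] ≤ (2·log(1+μ)/μ) · E[|μ − X|]. -/
open MeasureTheory

lemma log_pointwise {μ x : ℝ} (hx : 0 ≤ x) (hμpos : 0 < μ) (E : Set ℝ) :
    Real.log ((1 + μ) / (1 + x)) * E.indicator (fun _ => (1 : ℝ)) x ≤
      Real.log (1 + μ) / μ * |μ - x| := by
  have hlogμ : 0 < Real.log (1 + μ) := Real.log_pos (by linarith)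
  have hRHS : 0 ≤ Real.log (1 + μ) / μ * |μ - x| := by positivity
  by_cases hxE : x ∈ E
  · rw [Set.indicator_of_mem hxE, mul_one]
    rw [Real.log_div (by linarith) (by linarith)]
    rcases le_or_gt μ x with h | h
    · have : Real.log (1 + μ) ≤ Real.log (1 + x) :=
        Real.log_le_log (by linarith) (by linarith)
      linarith
    · -- x < μ: concavity of log gives (x/μ) log(1+μ) ≤ log(1+x)
      have hconc := (StrictConcaveOn.concaveOn strictConcaveOn_log_Ioi).2
        (Set.mem_Ioi.mpr (by norm_num : (0:ℝ) < 1))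
        (Set.mem_Ioi.mpr (by linarith : (0:ℝ) < 1 + μ))
        (by rw [sub_nonneg, div_le_one hμpos]; linarith : (0:ℝ) ≤ 1 - x / μ)
        (by positivity : (0:ℝ) ≤ x / μ)
        (by ring : (1 - x / μ) + x / μ = 1)
      have hcomb : (1 - x / μ) • (1:ℝ) + (x / μ) • (1 + μ) = 1 + x := by
        field_simp
        rw [smul_eq_mul, smul_eq_mul, div_mul_eq_mul_div, div_mul_eq_mul_div, ← add_div, div_eq_iff hμpos.ne']
        ring
      rw [hcomb, Real.log_one, smul_zero, zero_add, smul_eq_mul] at hconc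
      have habs : |μ - x| = μ - x := abs_of_pos (by linarith)
      rw [habs]
      have : Real.log (1 + μ) / μ * (μ - x) = Real.log (1+μ) - x / μ * Real.log (1+μ) := by
        field_simp
      linarith
  · rw [Set.indicator_of_notMem hxE, mul_zero]
    exact hRHS

theorem log_dev_inq
    {Ω : Type*} [MeasureSpace Ω] (P : Measure Ω) [IsProbabilityMeasure P]
    (X : Ω → ℝ) (hX : Integrable X P) (hXpos : ∀ ω, 0 ≤ X ω)
    (μ : ℝ) (hμ : μ = ∫ ω, X ω ∂P) (hμpos : 0 < μ)
    (E : Set ℝ) (hE : MeasurableSet E) :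
    ∫ ω, Real.log ((1 + μ) / (1 + X ω)) * E.indicator (fun _ => (1 : ℝ)) (X ω) ∂P ≤
      2 * Real.log (1 + μ) / μ * ∫ ω, |μ - X ω| ∂P := by
  have hlogμ : 0 < Real.log (1 + μ) := Real.log_pos (by linarith)
  set f : Ω → ℝ := fun ω => Real.log ((1 + μ) / (1 + X ω)) * E.indicator (fun _ => (1 : ℝ)) (X ω) with hf
  have habs_int : Integrable (fun ω => |μ - X ω|) P := ((integrable_const μ).sub hX).abs
  -- measurability of f
  have hgmeas : Measurable (fun x : ℝ => Real.log ((1 + μ) / (1 + x)) * E.indicator (fun _ => (1 : ℝ)) x) := by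
    apply Measurable.mul
    · exact Real.measurable_log.comp (measurable_const.div (measurable_const.add measurable_id))
    · exact measurable_const.indicator hE
  have hfmeas : AEStronglyMeasurable f P :=
    (hgmeas.comp_aemeasurable hX.aemeasurable).aestronglyMeasurable
  -- integrability of f via domination
  have hf_int : Integrable f P := by
    apply Integrable.mono ((integrable_const (Real.log (1 + μ))).add hX) hfmeas
    filter_upwards with ω
    have hx := hXpos ω
    have h1 : ‖E.indicator (fun _ => (1 : ℝ)) (X ω)‖ ≤ 1 := by
      rw [Real.norm_eq_abs]
      by_cases h : X ω ∈ E
      · rw [Set.indicator_of_mem h]; norm_num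
      · rw [Set.indicator_of_notMem h]; norm_num
    have hlog1 : 0 ≤ Real.log (1 + X ω) := Real.log_nonneg (by linarith)
    have hlog2 : Real.log (1 + X ω) ≤ X ω := by
      have := Real.log_le_sub_one_of_pos (show (0:ℝ) < 1 + X ω by linarith)
      linarith
    have hsplit : Real.log ((1 + μ) / (1 + X ω)) = Real.log (1 + μ) - Real.log (1 + X ω) :=
      Real.log_div (by linarith) (by linarith)
    show ‖Real.log ((1 + μ) / (1 + X ω)) * E.indicator (fun _ => (1 : ℝ)) (X ω)‖ ≤ _
    rw [Real.norm_eq_abs, abs_mul]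
    calc |Real.log ((1 + μ) / (1 + X ω))| * |E.indicator (fun _ => (1:ℝ)) (X ω)|
        ≤ |Real.log ((1 + μ) / (1 + X ω))| * 1 := by
          apply mul_le_mul_of_nonneg_left _ (abs_nonneg _)
          simpa [Real.norm_eq_abs] using h1
      _ ≤ ‖Real.log (1 + μ) + X ω‖ := by
          rw [mul_one, hsplit, Real.norm_eq_abs]
          rw [abs_of_nonneg (by linarith : (0:ℝ) ≤ Real.log (1 + μ) + X ω)]
          rw [abs_sub_le_iff]
          constructor <;> linarith
  -- main inequality
  have hstep : ∫ ω, f ω ∂P ≤ ∫ ω, Real.log (1 + μ) / μ * |μ - X ω| ∂P := by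
    apply integral_mono hf_int (habs_int.const_mul _)
    intro ω
    exact log_pointwise (hXpos ω) hμpos E
  rw [integral_const_mul] at hstep
  have hint_nonneg : 0 ≤ ∫ ω, |μ - X ω| ∂P := integral_nonneg fun ω => abs_nonneg _
  have hlast : Real.log (1 + μ) / μ * ∫ ω, |μ - X ω| ∂P ≤
      2 * Real.log (1 + μ) / μ * ∫ ω, |μ - X ω| ∂P := by
    apply mul_le_mul_of_nonneg_right _ hint_nonneg
    gcongr
    linarith
  exact hstep.trans hlast
end

section
/- For all x ≥ 0, μ > 0, and any measurable set E ⊆ ℝ, log((1+μ)/(1+x)) · 1_E(x) ≤ ((1 + log(1+μ))/(1+μ)) · (μ − x)₊. -/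
open Real Set

lemma key_log_ineq (x μ : ℝ) (hx : 0 ≤ x) (hxμ : x ≤ μ) (hμ : 0 < μ) :
    Real.log (1 + μ) - Real.log (1 + x) ≤ (1 + Real.log (1 + μ)) / (1 + μ) * (μ - x) := by
  set b : ℝ := 1 + μ with hb
  set c : ℝ := (1 + Real.log b) / b with hc
  have hb1 : 1 < b := by simp [hb]; linarith
  have hb0 : 0 < b := by linarith
  have hlogb : 0 < Real.log b := Real.log_pos hb1
  have hc0 : 0 ≤ c := div_nonneg (by linarith) hb0.le
  -- h(a) = log a - c * a is concave on Ioi 0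
  have hconc : ConcaveOn ℝ (Ioi (0:ℝ)) (fun a => Real.log a - c * a) := by
    exact strictConcaveOn_log_Ioi.concaveOn.sub ((convexOn_id (convex_Ioi 0)).smul hc0)
  set a : ℝ := 1 + x with ha
  have ha1 : 1 ≤ a := by linarith
  have hab : a ≤ b := by simp [ha, hb]; linarith
  have hmem : a ∈ segment ℝ (1:ℝ) b := by
    rw [segment_eq_Icc hb1.le]; exact ⟨ha1, hab⟩
  have h1 : Real.log 1 - c * 1 ≥ Real.log b - c * b := by
    have hle : Real.log b ≤ b - 1 := Real.log_le_sub_one_of_pos hb0 |>.trans_eq rfl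
    rw [Real.log_one]
    have : c * b = 1 + Real.log b := by rw [hc]; exact div_mul_cancel₀ _ hb0.ne'
    nlinarith [hle, hlogb]
  have hmin := hconc.ge_on_segment (mem_Ioi.mpr one_pos) (mem_Ioi.mpr hb0) hmem
  have hge : Real.log a - c * a ≥ Real.log b - c * b := le_trans (le_min (by linarith) le_rfl) hmin
  have : c * (μ - x) = c * b - c * a := by rw [hc, ha, hb]; ring
  linarith [hge]

theorem log_indicator_le_pos_part (E : Set ℝ) (x μ : ℝ) (hx : 0 ≤ x) (hμ : 0 < μ) :
    Real.log ((1 + μ) / (1 + x)) * E.indicator (fun _ => (1 : ℝ)) x ≤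
      (1 + Real.log (1 + μ)) / (1 + μ) * max (μ - x) 0 := by
  have hb0 : (0:ℝ) < 1 + μ := by linarith
  have hx0 : (0:ℝ) < 1 + x := by linarith
  have hc0 : 0 ≤ (1 + Real.log (1 + μ)) / (1 + μ) :=
    div_nonneg (by nlinarith [Real.log_pos (by linarith : (1:ℝ) < 1 + μ)]) hb0.le
  have hRHS : 0 ≤ (1 + Real.log (1 + μ)) / (1 + μ) * max (μ - x) 0 :=
    mul_nonneg hc0 (le_max_right _ _)
  by_cases hE : x ∈ E
  · rw [Set.indicator_of_mem hE, mul_one]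
    rcases le_or_gt x μ with hxμ | hxμ
    · rw [Real.log_div (by linarith) (by linarith), max_eq_left (by linarith)]
      exact key_log_ineq x μ hx hxμ hμ
    · refine le_trans ?_ hRHS
      apply Real.log_nonpos (by positivity)
      rw [div_le_one hx0]; linarith
  · rw [Set.indicator_of_notMem hE, mul_zero]; exact hRHS
end

section
/- Let f : ℝᵏ → ℝ be a non-negative integrable function, and for p ≥ 0 define the p-th moment μ_p(f) = ∫ ‖y‖^p f(y) dy. If μ_{k−1}(f) and μ_{k+1}(f) are finite, then ∫ √(f(y)) dy ≤ √(2·π^{k/2+1} / Γ(k/2)) · (μ_{k−1}(f)·μ_{k+1}(f))^{1/4}. -/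
open MeasureTheory Real Set Metric Filter
open scoped ENNReal
set_option maxHeartbeats 1000000

namespace MomentAux

section Polar

variable {E : Type*} [NormedAddCommGroup E] [NormedSpace ℝ E]
  [MeasurableSpace E] [BorelSpace E] [FiniteDimensional ℝ E] [Nontrivial E]

lemma lintegral_fun_norm_addHaar' (μ : Measure E) [μ.IsAddHaarMeasure]
    (f : ℝ → ℝ≥0∞) (hf : Measurable f) :
    ∫⁻ x, f ‖x‖ ∂μ = (Module.finrank ℝ E : ℝ≥0∞) * μ (ball 0 1) *
      ∫⁻ r in Ioi (0 : ℝ), ENNReal.ofReal (r ^ (Module.finrank ℝ E - 1)) * f r := by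
  have h0 := lintegral_subtype_comap (μ := μ) (measurableSet_singleton (0 : E)).compl
    (fun x => f ‖x‖)
  rw [MeasureTheory.restrict_compl_singleton] at h0
  rw [← h0]
  have h1 : ∫⁻ x : ({(0 : E)}ᶜ : Set E), f ‖x.1‖ ∂(μ.comap (↑))
      = ∫⁻ p : sphere (0 : E) 1 × Ioi (0 : ℝ), f p.2.1
          ∂(μ.toSphere.prod (.volumeIoiPow (Module.finrank ℝ E - 1))) := by
    rw [← (μ.measurePreserving_homeomorphUnitSphereProd).lintegral_comp_emb
      (Homeomorph.measurableEmbedding _) (fun p => f p.2.1)]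
    simp [homeomorphUnitSphereProd, homeomorphSphereProd_apply_snd_coe]
  rw [h1]
  have hm : Measurable fun p : sphere (0 : E) 1 × Ioi (0 : ℝ) => f p.2.1 :=
    hf.comp (measurable_subtype_coe.comp measurable_snd)
  rw [MeasureTheory.lintegral_prod _ hm.aemeasurable]
  simp only
  rw [lintegral_const, Measure.toSphere_apply_univ]
  have hden : Measurable fun r : Ioi (0 : ℝ) =>
      ENNReal.ofReal (r.1 ^ (Module.finrank ℝ E - 1)) :=
    ENNReal.measurable_ofReal.comp (measurable_subtype_coe.pow_const _)
  have h2 : ∫⁻ r : Ioi (0 : ℝ), f r.1 ∂(Measure.volumeIoiPow (Module.finrank ℝ E - 1))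
      = ∫⁻ r in Ioi (0 : ℝ), ENNReal.ofReal (r ^ (Module.finrank ℝ E - 1)) * f r := by
    have hg : Measurable fun r : Ioi (0 : ℝ) => f r.1 := hf.comp measurable_subtype_coe
    rw [Measure.volumeIoiPow, lintegral_withDensity_eq_lintegral_mul _ hden hg]
    exact lintegral_subtype_comap measurableSet_Ioi
      (fun r => ENNReal.ofReal (r ^ (Module.finrank ℝ E - 1)) * f r)
  rw [h2]
  ring

end Polar

lemma integrableOn_inv_add_sq' {a b : ℝ} (ha : 0 < a) (hb : 0 < b) :
    IntegrableOn (fun r : ℝ => (a + b * r ^ 2)⁻¹) (Ioi 0) := by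
  have hmin : 0 < min a b := lt_min ha hb
  have hcont : Continuous fun r : ℝ => (a + b * r ^ 2)⁻¹ := by
    refine Continuous.inv₀ (by continuity) fun r => ?_
    positivity
  have : Integrable fun r : ℝ => (min a b)⁻¹ * (1 + r ^ 2)⁻¹ :=
    integrable_inv_one_add_sq.const_mul _
  refine (this.mono' hcont.aestronglyMeasurable ?_).integrableOn
  refine Filter.Eventually.of_forall fun r => ?_
  have h1 : (0:ℝ) < 1 + r ^ 2 := by positivity
  have h2 : min a b * (1 + r ^ 2) ≤ a + b * r ^ 2 := by
    have := min_le_left a b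
    have := min_le_right a b
    nlinarith [sq_nonneg r]
  rw [Real.norm_eq_abs, abs_of_nonneg (by positivity)]
  calc (a + b * r ^ 2)⁻¹ ≤ (min a b * (1 + r ^ 2))⁻¹ := by
        apply inv_anti₀ (by positivity) h2
    _ = (min a b)⁻¹ * (1 + r ^ 2)⁻¹ := by rw [mul_inv]

lemma integral_inv_add_sq' {a b : ℝ} (ha : 0 < a) (hb : 0 < b) :
    ∫ r in Ioi (0:ℝ), (a + b * r ^ 2)⁻¹ = π / (2 * Real.sqrt (a * b)) := by
  set c := Real.sqrt (b / a) with hc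
  have hc0 : 0 < c := Real.sqrt_pos.mpr (div_pos hb ha)
  have hkey : ∀ r : ℝ, (a + b * r ^ 2)⁻¹ = a⁻¹ * (1 + (r * c) ^ 2)⁻¹ := by
    intro r
    have : (r * c) ^ 2 = r ^ 2 * (b / a) := by
      rw [mul_pow, hc, Real.sq_sqrt (div_nonneg hb.le ha.le)]
    rw [this, ← mul_inv]
    congr 1
    field_simp
  simp only [hkey]
  rw [MeasureTheory.integral_const_mul,
    integral_comp_mul_right_Ioi (fun x => (1 + x ^ 2)⁻¹) 0 hc0, zero_mul,
    integral_Ioi_inv_one_add_sq, Real.arctan_zero, sub_zero, smul_eq_mul]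
  have hab : Real.sqrt (a * b) = a * c := by
    rw [hc, ← Real.sqrt_sq ha.le, ← Real.sqrt_mul (sq_nonneg a)]
    congr 1
    field_simp
    rw [Real.sq_sqrt (sq_nonneg _)]
  rw [hab]
  field_simp

lemma lintegral_inv_weight (k : ℕ) (hk : 1 ≤ k) {a b : ℝ} (ha : 0 < a) (hb : 0 < b) :
    ∫⁻ y : EuclideanSpace ℝ (Fin k),
        ENNReal.ofReal ((a * ‖y‖ ^ ((k:ℝ)-1) + b * ‖y‖ ^ ((k:ℝ)+1))⁻¹)
      = ENNReal.ofReal (π ^ ((k:ℝ)/2 + 1) / (Real.Gamma ((k:ℝ)/2) * Real.sqrt (a * b))) := by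
  haveI : Nonempty (Fin k) := Fin.pos_iff_nonempty.mp (by omega)
  have hfr : Module.finrank ℝ (EuclideanSpace ℝ (Fin k)) = k := finrank_euclideanSpace_fin
  haveI : Nontrivial (EuclideanSpace ℝ (Fin k)) :=
    Module.nontrivial_of_finrank_pos (R := ℝ) (by rw [hfr]; omega)
  have hmes : Measurable fun r : ℝ => ENNReal.ofReal ((a * r ^ ((k:ℝ)-1) + b * r ^ ((k:ℝ)+1))⁻¹) :=
    ENNReal.measurable_ofReal.comp
      ((((measurable_id.pow_const _).const_mul a).add
        ((measurable_id.pow_const _).const_mul b)).inv)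
  rw [lintegral_fun_norm_addHaar' volume
    (fun r => ENNReal.ofReal ((a * r ^ ((k:ℝ)-1) + b * r ^ ((k:ℝ)+1))⁻¹)) hmes, hfr]
  have hcongr : ∫⁻ r in Ioi (0:ℝ), ENNReal.ofReal (r ^ (k - 1)) *
        ENNReal.ofReal ((a * r ^ ((k:ℝ)-1) + b * r ^ ((k:ℝ)+1))⁻¹)
      = ∫⁻ r in Ioi (0:ℝ), ENNReal.ofReal ((a + b * r ^ 2)⁻¹) := by
    refine setLIntegral_congr_fun measurableSet_Ioi ?_
    intro r hr
    rw [mem_Ioi] at hr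
    dsimp only
    rw [← ENNReal.ofReal_mul (by positivity)]
    congr 1
    have e1 : r ^ ((k:ℝ)-1) = r ^ (k-1 : ℕ) := by
      rw [← Real.rpow_natCast r (k-1), Nat.cast_sub hk, Nat.cast_one]
    have e2 : r ^ ((k:ℝ)+1) = r ^ (k-1 : ℕ) * r ^ 2 := by
      rw [show ((k:ℝ)+1) = ((k:ℝ)-1) + 2 by ring, Real.rpow_add hr, e1, Real.rpow_two]
    rw [e1, e2]
    have hx : (0:ℝ) < r ^ (k-1 : ℕ) := by positivity
    have hq : (0:ℝ) < a + b * r ^ 2 := by positivity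
    field_simp
  rw [hcongr, ← ofReal_integral_eq_lintegral_ofReal (integrableOn_inv_add_sq' ha hb)
      (Filter.Eventually.of_forall fun r => by positivity),
    integral_inv_add_sq' ha hb]
  rw [EuclideanSpace.volume_ball (Fin k) 0 1, Fintype.card_fin, ENNReal.ofReal_one, one_pow, one_mul,
    ← ENNReal.ofReal_natCast, ← ENNReal.ofReal_mul (by positivity), ← ENNReal.ofReal_mul (by positivity)]
  congr 1
  have hsq : Real.sqrt π ^ k = π ^ ((k:ℝ)/2) := by
    rw [Real.sqrt_eq_rpow, ← Real.rpow_natCast (π ^ ((1:ℝ)/2)) k, ← Real.rpow_mul pi_pos.le]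
    norm_num
    congr 1
    ring
  have hG : Real.Gamma ((k:ℝ)/2 + 1) = ((k:ℝ)/2) * Real.Gamma ((k:ℝ)/2) :=
    Real.Gamma_add_one (by positivity)
  have hGpos : 0 < Real.Gamma ((k:ℝ)/2) := Real.Gamma_pos_of_pos (by positivity)
  have hpi : π ^ ((k:ℝ)/2 + 1) = π ^ ((k:ℝ)/2) * π := Real.rpow_add_one pi_pos.ne' _
  have hk0 : (0:ℝ) < (k:ℝ) := by positivity
  have hs : 0 < Real.sqrt (a*b) := Real.sqrt_pos.mpr (by positivity)
  rw [hsq, hG, hpi]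
  field_simp

end MomentAux

open MomentAux

theorem int_sqrt_le_moment_bound (k : ℕ) (hk : 1 ≤ k)
    (f : EuclideanSpace ℝ (Fin k) → ℝ) (hf : ∀ y, 0 ≤ f y)
    (hint : Integrable f)
    (h1 : Integrable (fun y => ‖y‖ ^ ((k : ℝ) - 1) * f y))
    (h2 : Integrable (fun y => ‖y‖ ^ ((k : ℝ) + 1) * f y)) :
    ∫ y, Real.sqrt (f y) ≤
      Real.sqrt (2 * Real.pi ^ ((k : ℝ) / 2 + 1) / Real.Gamma ((k : ℝ) / 2)) *
        ((∫ y, ‖y‖ ^ ((k : ℝ) - 1) * f y) * (∫ y, ‖y‖ ^ ((k : ℝ) + 1) * f y)) ^ ((1 : ℝ) / 4) := by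
  haveI : Nonempty (Fin k) := Fin.pos_iff_nonempty.mp (by omega)
  have hfr : Module.finrank ℝ (EuclideanSpace ℝ (Fin k)) = k := finrank_euclideanSpace_fin
  haveI : Nontrivial (EuclideanSpace ℝ (Fin k)) :=
    Module.nontrivial_of_finrank_pos (R := ℝ) (by rw [hfr]; omega)
  have hGpos : 0 < Real.Gamma ((k:ℝ)/2) := Real.Gamma_pos_of_pos (by positivity)
  have hne : ∀ᵐ y : EuclideanSpace ℝ (Fin k) ∂volume, y ≠ 0 := by
    have hs : {y : EuclideanSpace ℝ (Fin k) | ¬ y ≠ 0} = {0} := by ext y; simp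
    rw [ae_iff, hs]
    exact measure_singleton 0
  set I1 := ∫ y, ‖y‖ ^ ((k:ℝ)-1) * f y with hI1def
  set I2 := ∫ y, ‖y‖ ^ ((k:ℝ)+1) * f y with hI2def
  have hI1nn : 0 ≤ I1 :=
    integral_nonneg fun y => mul_nonneg (Real.rpow_nonneg (norm_nonneg _) _) (hf y)
  have hI2nn : 0 ≤ I2 :=
    integral_nonneg fun y => mul_nonneg (Real.rpow_nonneg (norm_nonneg _) _) (hf y)
  by_cases hzero : I1 = 0 ∨ I2 = 0
  · -- degenerate case : f = 0 a.e.
    have hf0 : ∀ᵐ y : EuclideanSpace ℝ (Fin k) ∂volume, f y = 0 := by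
      rcases hzero with h | h
      · have h0 := (integral_eq_zero_iff_of_nonneg_ae
          (Eventually.of_forall fun y =>
            mul_nonneg (Real.rpow_nonneg (norm_nonneg _) _) (hf y)) h1).mp h
        filter_upwards [h0, hne] with y hy hy0
        have hpos : 0 < ‖y‖ ^ ((k:ℝ)-1) :=
          Real.rpow_pos_of_pos (norm_pos_iff.mpr hy0) _
        simpa [hpos.ne'] using hy
      · have h0 := (integral_eq_zero_iff_of_nonneg_ae
          (Eventually.of_forall fun y =>
            mul_nonneg (Real.rpow_nonneg (norm_nonneg _) _) (hf y)) h2).mp h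
        filter_upwards [h0, hne] with y hy hy0
        have hpos : 0 < ‖y‖ ^ ((k:ℝ)+1) :=
          Real.rpow_pos_of_pos (norm_pos_iff.mpr hy0) _
        simpa [hpos.ne'] using hy
    have lhs0 : ∫ y, Real.sqrt (f y) = 0 := by
      rw [integral_congr_ae (g := fun _ => (0:ℝ)) (hf0.mono fun y hy => by simp [hy])]
      simp
    have hprod : I1 * I2 = 0 := by rcases hzero with h | h <;> simp [h]
    rw [lhs0, hprod, Real.zero_rpow (by norm_num), mul_zero]
  · push_neg at hzero
    have hI1 : 0 < I1 := lt_of_le_of_ne hI1nn (Ne.symm hzero.1)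
    have hI2 : 0 < I2 := lt_of_le_of_ne hI2nn (Ne.symm hzero.2)
    set a := I1⁻¹ with hadef
    set b := I2⁻¹ with hbdef
    have ha : 0 < a := inv_pos.mpr hI1
    have hb : 0 < b := inv_pos.mpr hI2
    set w : EuclideanSpace ℝ (Fin k) → ℝ :=
      fun y => a * ‖y‖ ^ ((k:ℝ)-1) + b * ‖y‖ ^ ((k:ℝ)+1) with hwdef
    have hw_nn : ∀ y, 0 ≤ w y := fun y =>
      add_nonneg (mul_nonneg ha.le (Real.rpow_nonneg (norm_nonneg _) _))
        (mul_nonneg hb.le (Real.rpow_nonneg (norm_nonneg _) _))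
    have hw_meas : Measurable w :=
      ((measurable_norm.pow_const _).const_mul a).add
        ((measurable_norm.pow_const _).const_mul b)
    have hwf_eq : (fun y => w y * f y)
        = fun y => a * (‖y‖ ^ ((k:ℝ)-1) * f y) + b * (‖y‖ ^ ((k:ℝ)+1) * f y) := by
      funext y; simp only [hwdef]; ring
    have hwf : Integrable (fun y => w y * f y) := by
      rw [hwf_eq]; exact (h1.const_mul a).add (h2.const_mul b)
    have hwf_int : ∫ y, w y * f y = 2 := by
      rw [hwf_eq, integral_add (h1.const_mul a) (h2.const_mul b),
        integral_const_mul, integral_const_mul, ← hI1def, ← hI2def, hadef, hbdef,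
        inv_mul_cancel₀ hI1.ne', inv_mul_cancel₀ hI2.ne']
      norm_num
    -- ENNReal Cauchy-Schwarz
    set G : EuclideanSpace ℝ (Fin k) → ℝ≥0∞ :=
      fun y => ENNReal.ofReal (Real.sqrt ((w y)⁻¹)) with hGdef
    set H : EuclideanSpace ℝ (Fin k) → ℝ≥0∞ :=
      fun y => ENNReal.ofReal (Real.sqrt (w y * f y)) with hHdef
    have hG_meas : AEMeasurable G volume :=
      (ENNReal.measurable_ofReal.comp
        (Real.continuous_sqrt.measurable.comp hw_meas.inv)).aemeasurable
    have hH_meas : AEMeasurable H volume := by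
      have : AEMeasurable (fun y => w y * f y) volume :=
        hw_meas.aemeasurable.mul hint.1.aemeasurable
      exact ENNReal.measurable_ofReal.comp_aemeasurable
        (Real.continuous_sqrt.measurable.comp_aemeasurable this)
    have hae : (fun y => ENNReal.ofReal (Real.sqrt (f y)))
        =ᵐ[volume] fun y => G y * H y := by
      filter_upwards [hne] with y hy0
      have hwpos : 0 < w y := by
        have h' : 0 < ‖y‖ ^ ((k:ℝ)-1) := Real.rpow_pos_of_pos (norm_pos_iff.mpr hy0) _
        have h'' : 0 < ‖y‖ ^ ((k:ℝ)+1) := Real.rpow_pos_of_pos (norm_pos_iff.mpr hy0) _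
        simp only [hwdef]
        exact add_pos (mul_pos ha h') (mul_pos hb h'')
      simp only [hGdef, hHdef]
      rw [← ENNReal.ofReal_mul (Real.sqrt_nonneg _),
        ← Real.sqrt_mul (inv_nonneg.mpr hwpos.le), inv_mul_cancel_left₀ hwpos.ne']
    set C0 : ℝ := π ^ ((k:ℝ)/2 + 1) / (Real.Gamma ((k:ℝ)/2) * Real.sqrt (a*b)) with hC0def
    have hC0nn : 0 ≤ C0 := by
      apply div_nonneg (Real.rpow_nonneg pi_pos.le _)
      exact mul_nonneg hGpos.le (Real.sqrt_nonneg _)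
    have hG2 : ∫⁻ y, G y ^ (2:ℝ) = ENNReal.ofReal C0 := by
      have hGy : ∀ y, G y ^ (2:ℝ) = ENNReal.ofReal ((w y)⁻¹) := fun y => by
        rw [hGdef, ENNReal.ofReal_rpow_of_nonneg (Real.sqrt_nonneg _) (by norm_num),
          Real.rpow_two, Real.sq_sqrt (inv_nonneg.mpr (hw_nn y))]
      simp only [hGy, hwdef]
      exact lintegral_inv_weight k hk ha hb
    have hH2 : ∫⁻ y, H y ^ (2:ℝ) = ENNReal.ofReal 2 := by
      have hHy : ∀ y, H y ^ (2:ℝ) = ENNReal.ofReal (w y * f y) := fun y => by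
        rw [hHdef, ENNReal.ofReal_rpow_of_nonneg (Real.sqrt_nonneg _) (by norm_num),
          Real.rpow_two, Real.sq_sqrt (mul_nonneg (hw_nn y) (hf y))]
      simp only [hHy]
      rw [← ofReal_integral_eq_lintegral_ofReal hwf
        (Eventually.of_forall fun y => mul_nonneg (hw_nn y) (hf y)), hwf_int]
    have hCS := ENNReal.lintegral_mul_le_Lp_mul_Lq volume
      Real.HolderConjugate.two_two hG_meas hH_meas
    have hbound : ∫⁻ y, ENNReal.ofReal (Real.sqrt (f y))
        ≤ ENNReal.ofReal (Real.sqrt C0 * Real.sqrt 2) := by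
      calc ∫⁻ y, ENNReal.ofReal (Real.sqrt (f y)) = ∫⁻ y, (G * H) y :=
            lintegral_congr_ae hae
        _ ≤ (∫⁻ y, G y ^ (2:ℝ)) ^ ((1:ℝ)/2) * (∫⁻ y, H y ^ (2:ℝ)) ^ ((1:ℝ)/2) := by
            simpa using hCS
        _ = ENNReal.ofReal (Real.sqrt C0 * Real.sqrt 2) := by
            rw [hG2, hH2, ENNReal.ofReal_rpow_of_nonneg hC0nn (by norm_num),
              ENNReal.ofReal_rpow_of_nonneg (by norm_num) (by norm_num),
              ← ENNReal.ofReal_mul (by positivity), Real.sqrt_eq_rpow, Real.sqrt_eq_rpow]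
    have hsm : AEStronglyMeasurable (fun y => Real.sqrt (f y)) volume :=
      Real.continuous_sqrt.comp_aestronglyMeasurable hint.1
    have hlhs : ∫ y, Real.sqrt (f y)
        = (∫⁻ y, ENNReal.ofReal (Real.sqrt (f y))).toReal :=
      integral_eq_lintegral_of_nonneg_ae
        (Eventually.of_forall fun y => Real.sqrt_nonneg _) hsm
    have hle : ∫ y, Real.sqrt (f y) ≤ Real.sqrt C0 * Real.sqrt 2 := by
      rw [hlhs]
      calc (∫⁻ y, ENNReal.ofReal (Real.sqrt (f y))).toReal
          ≤ (ENNReal.ofReal (Real.sqrt C0 * Real.sqrt 2)).toReal :=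
            ENNReal.toReal_mono ENNReal.ofReal_ne_top hbound
        _ = Real.sqrt C0 * Real.sqrt 2 := ENNReal.toReal_ofReal (by positivity)
    refine hle.trans (le_of_eq ?_)
    -- final algebra
    have hab : Real.sqrt (a * b) = (Real.sqrt (I1 * I2))⁻¹ := by
      rw [hadef, hbdef, ← mul_inv, Real.sqrt_inv]
    have hC0' : C0 = (π ^ ((k:ℝ)/2 + 1) / Real.Gamma ((k:ℝ)/2)) * Real.sqrt (I1 * I2) := by
      rw [hC0def, hab]
      have hs : 0 < Real.sqrt (I1 * I2) := Real.sqrt_pos.mpr (by positivity)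
      field_simp
    have h4 : (I1 * I2) ^ ((1:ℝ)/4) = Real.sqrt (Real.sqrt (I1 * I2)) := by
      rw [Real.sqrt_eq_rpow, Real.sqrt_eq_rpow, ← Real.rpow_mul (by positivity)]
      norm_num
    rw [hC0', h4, ← Real.sqrt_mul (by positivity), ← Real.sqrt_mul (by positivity)]
    congr 1
    field_simp
end

section
/- The function ξ(z) = z^{−1/2}·Γ(z + 1/2)/Γ(z) satisfies ξ(k/2) ≤ ξ(k − 1/2) for every integer k ≥ 1; equivalently, the constant ρ(k) = π·2^{1−k}·[Γ(k−1/2)·Γ(k+1/2)]^{1/2}/Γ(k/2)² satisfies ρ(k) ≤ √(π k / 2) for all integers k ≥ 1. -/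
open Real Filter

noncomputable def xi (z : ℝ) : ℝ := Gamma (z + 1/2) / (Real.sqrt z * Gamma z)

lemma gamma_mid_sq_le {x y : ℝ} (hx : 0 < x) (hy : 0 < y) :
    Gamma ((x + y) / 2) ^ 2 ≤ Gamma x * Gamma y := by
  have h := convexOn_log_Gamma.2 (Set.mem_Ioi.mpr hx) (Set.mem_Ioi.mpr hy)
    (by norm_num : (0:ℝ) ≤ 1/2) (by norm_num : (0:ℝ) ≤ 1/2) (by norm_num)
  simp only [Function.comp_apply, smul_eq_mul] at h
  have hm : (1/2 : ℝ) * x + (1/2 : ℝ) * y = (x + y) / 2 := by ring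
  rw [hm] at h
  have hmp : 0 < (x + y) / 2 := by linarith
  have h2 : Real.log (Gamma ((x+y)/2) ^ 2) ≤ Real.log (Gamma x * Gamma y) := by
    rw [Real.log_pow, Real.log_mul (Gamma_pos_of_pos hx).ne' (Gamma_pos_of_pos hy).ne']
    push_cast
    linarith
  have := Real.exp_le_exp.mpr h2
  rwa [Real.exp_log (by positivity), Real.exp_log (by positivity)] at this

lemma xi_pos {z : ℝ} (hz : 0 < z) : 0 < xi z :=
  div_pos (Gamma_pos_of_pos (by linarith))
    (mul_pos (Real.sqrt_pos.mpr hz) (Gamma_pos_of_pos hz))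

lemma xi_le_one {z : ℝ} (hz : 0 < z) : xi z ≤ 1 := by
  have h := gamma_mid_sq_le hz (show (0:ℝ) < z + 1 by linarith)
  rw [show (z + (z+1))/2 = z + 1/2 by ring, Real.Gamma_add_one hz.ne'] at h
  have hG := Gamma_pos_of_pos hz
  have hkey : Gamma (z + 1/2) ≤ Real.sqrt z * Gamma z := by
    refine le_of_pow_le_pow_left₀ two_ne_zero (by positivity) ?_
    rw [mul_pow, Real.sq_sqrt hz.le]
    nlinarith
  rw [xi, div_le_one (by positivity)]
  simpa using hkey

lemma sqrt_ratio_le_xi {z : ℝ} (hz : 0 < z) :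
    Real.sqrt (z / (z + 1/2)) ≤ xi z := by
  have h := gamma_mid_sq_le (show (0:ℝ) < z + 1/2 by linarith)
    (show (0:ℝ) < z + 3/2 by linarith)
  rw [show ((z+1/2) + (z+3/2))/2 = (z+1) by ring,
    show z + 3/2 = (z + 1/2) + 1 by ring,
    Real.Gamma_add_one (by positivity : z + 1/2 ≠ 0),
    Real.Gamma_add_one hz.ne'] at h
  have hG := Gamma_pos_of_pos hz
  have hG2 := Gamma_pos_of_pos (show (0:ℝ) < z + 1/2 by linarith)
  have hkey : Real.sqrt (z/(z+1/2)) * (Real.sqrt z * Gamma z) ≤ Gamma (z + 1/2) := by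
    refine le_of_pow_le_pow_left₀ two_ne_zero (by positivity) ?_
    rw [mul_pow, mul_pow, Real.sq_sqrt hz.le,
      Real.sq_sqrt (by positivity : (0:ℝ) ≤ z / (z+1/2))]
    rw [div_mul_eq_mul_div, div_le_iff₀ (by positivity)]
    nlinarith
  rw [xi, le_div_iff₀ (by positivity)]
  exact hkey

lemma xi_succ {z : ℝ} (hz : 0 < z) :
    xi (z + 1) = xi z * ((z + 1/2) / Real.sqrt (z * (z + 1))) := by
  have hss := Real.mul_self_sqrt hz.le
  have hG := Gamma_pos_of_pos hz
  have hs := Real.sqrt_pos.mpr hz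
  have hs1 := Real.sqrt_pos.mpr (show (0:ℝ) < z + 1 by linarith)
  rw [xi, xi, show z + 1 + 1/2 = (z + 1/2) + 1 by ring,
    Real.Gamma_add_one (by positivity : z + 1/2 ≠ 0),
    Real.Gamma_add_one hz.ne', Real.sqrt_mul hz.le]
  field_simp
  ring_nf
  rw [Real.sq_sqrt hz.le]

lemma p_mono {a b : ℝ} (ha : 0 < a) (hab : a ≤ b) :
    (b + 1/2) / Real.sqrt (b * (b + 1)) ≤ (a + 1/2) / Real.sqrt (a * (a + 1)) := by
  have hb : 0 < b := ha.trans_le hab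
  rw [div_le_div_iff₀ (Real.sqrt_pos.mpr (by positivity)) (Real.sqrt_pos.mpr (by positivity))]
  refine le_of_pow_le_pow_left₀ two_ne_zero (by positivity) ?_
  rw [mul_pow, mul_pow, Real.sq_sqrt (by positivity : (0:ℝ) ≤ a * (a+1)),
    Real.sq_sqrt (by positivity : (0:ℝ) ≤ b * (b+1))]
  nlinarith

lemma key {a b : ℝ} (ha : 0 < a) (hab : a ≤ b) (n : ℕ) :
    xi a * xi (b + n) ≤ xi b * xi (a + n) := by
  have hb : 0 < b := ha.trans_le hab
  induction n with
  | zero => simp [mul_comm]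
  | succ n ih =>
    have han : 0 < a + n := by positivity
    have hbn : 0 < b + n := by positivity
    have h1 : b + ((n : ℝ) + 1) = (b + n) + 1 := by ring
    have h2 : a + ((n : ℝ) + 1) = (a + n) + 1 := by ring
    push_cast
    rw [h1, h2, xi_succ hbn, xi_succ han, ← mul_assoc, ← mul_assoc]
    have hp : (b + n + 1/2) / Real.sqrt ((b+n) * (b+n+1)) ≤
        (a + n + 1/2) / Real.sqrt ((a+n) * (a+n+1)) :=
      p_mono han (by linarith)
    refine mul_le_mul ih hp (by positivity) ?_
    exact mul_nonneg (xi_pos hb).le (xi_pos han).le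

lemma xi_tendsto {b : ℝ} (hb : 0 < b) :
    Tendsto (fun n : ℕ => xi (b + n)) atTop (nhds 1) := by
  have h1 : Tendsto (fun n : ℕ => b + (n : ℝ) + 1/2) atTop atTop := by
    apply tendsto_atTop_add_const_right
    exact tendsto_atTop_add_const_left _ _ tendsto_natCast_atTop_atTop
  have h2 : Tendsto (fun n : ℕ => (1/2 : ℝ) / (b + n + 1/2)) atTop (nhds 0) :=
    Tendsto.div_atTop tendsto_const_nhds h1
  have h3 : Tendsto (fun n : ℕ => (b + n) / (b + n + 1/2)) atTop (nhds 1) := by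
    have h4 : Tendsto (fun n : ℕ => (1:ℝ) - (1/2) / (b + n + 1/2)) atTop (nhds (1 - 0)) :=
      (tendsto_const_nhds (x := (1:ℝ))).sub h2
    rw [sub_zero] at h4
    refine Tendsto.congr (fun n => ?_) h4
    have : (0:ℝ) < b + n + 1/2 := by positivity
    field_simp
    ring
  have h5 : Tendsto (fun n : ℕ => Real.sqrt ((b + n) / (b + n + 1/2))) atTop (nhds 1) := by
    have := (Real.continuous_sqrt.tendsto 1).comp h3
    simpa [Function.comp_def] using this
  refine tendsto_of_tendsto_of_tendsto_of_le_of_le h5 tendsto_const_nhds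
    (fun n => ?_) (fun n => xi_le_one (by positivity))
  have hbn : (0:ℝ) < b + n := by positivity
  simpa using sqrt_ratio_le_xi hbn

lemma xi_mono {a b : ℝ} (ha : 0 < a) (hab : a ≤ b) : xi a ≤ xi b := by
  have hb : 0 < b := ha.trans_le hab
  have hbound : ∀ n : ℕ, xi a * xi (b + n) ≤ xi b := by
    intro n
    refine (key ha hab n).trans ?_
    exact mul_le_of_le_one_right (xi_pos hb).le (xi_le_one (by positivity))
  have hlim : Tendsto (fun n : ℕ => xi a * xi (b + n)) atTop (nhds (xi a * 1)) :=
    tendsto_const_nhds.mul (xi_tendsto hb)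
  rw [mul_one] at hlim
  exact le_of_tendsto hlim (Eventually.of_forall hbound)

theorem rho_le_sqrt (k : ℕ) (hk : 1 ≤ k) :
    Real.pi * 2 ^ (1 - (k : ℝ)) *
        Real.sqrt (Real.Gamma ((k : ℝ) - 1 / 2) * Real.Gamma ((k : ℝ) + 1 / 2)) /
        Real.Gamma ((k : ℝ) / 2) ^ 2 ≤
      Real.sqrt (Real.pi * (k : ℝ) / 2) := by
  have hc : (1:ℝ) ≤ (k : ℝ) := by exact_mod_cast hk
  set c := (k : ℝ) with hcdef
  have hc0 : (0:ℝ) < c := by linarith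
  have hG1 : 0 < Gamma (c/2) := Gamma_pos_of_pos (by linarith)
  have hG2 : 0 < Gamma (c/2 + 1/2) := Gamma_pos_of_pos (by linarith)
  have hG3 : 0 < Gamma (c - 1/2) := Gamma_pos_of_pos (by linarith)
  have hG4 : 0 < Gamma c := Gamma_pos_of_pos hc0
  -- the xi monotonicity
  have hxi : xi (c/2) ≤ xi (c - 1/2) := xi_mono (by linarith) (by linarith)
  have H : Gamma (c/2 + 1/2) * (Real.sqrt (c - 1/2) * Gamma (c - 1/2)) ≤
      Gamma c * (Real.sqrt (c/2) * Gamma (c/2)) := by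
    rw [xi, xi, show c - 1/2 + 1/2 = c by ring,
      div_le_div_iff₀ (mul_pos (Real.sqrt_pos.mpr (by linarith)) hG1)
        (mul_pos (Real.sqrt_pos.mpr (by linarith)) hG3)] at hxi
    linarith
  -- duplication formula
  have hdup := Real.Gamma_mul_Gamma_add_half (c/2)
  rw [show 2*(c/2) = c by ring] at hdup
  have hsπ : Real.sqrt π * Real.sqrt π = π := Real.mul_self_sqrt pi_pos.le
  have hπ : 0 < Real.sqrt π := Real.sqrt_pos.mpr pi_pos
  have h2pow : (2:ℝ) ^ (1 - c) = Gamma (c/2) * Gamma (c/2 + 1/2) / (Gamma c * Real.sqrt π) := by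
    rw [hdup]; field_simp
  have hA : Gamma (c + 1/2) = (c - 1/2) * Gamma (c - 1/2) := by
    rw [show c + 1/2 = (c - 1/2) + 1 by ring,
      Real.Gamma_add_one (ne_of_gt (by linarith : (0:ℝ) < c - 1/2))]
  have hB : Real.sqrt (Gamma (c - 1/2) * Gamma (c + 1/2)) =
      Real.sqrt (c - 1/2) * Gamma (c - 1/2) := by
    rw [hA, show Gamma (c-1/2) * ((c-1/2) * Gamma (c-1/2)) = (c-1/2) * Gamma (c-1/2)^2 by ring,
      Real.sqrt_mul (by linarith), Real.sqrt_sq hG3.le]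
  rw [hB, h2pow, show π * c / 2 = π * (c/2) by ring, Real.sqrt_mul pi_pos.le]
  set s := Real.sqrt π with hs
  rw [← hsπ]
  have H2 := mul_le_mul_of_nonneg_left H (by positivity : (0:ℝ) ≤ s * s * Gamma (c/2))
  rw [div_le_iff₀ (pow_pos hG1 2)]
  rw [show s * s * (Gamma (c/2) * Gamma (c/2 + 1/2) / (Gamma c * s)) *
      (Real.sqrt (c - 1/2) * Gamma (c - 1/2)) =
      s * s * (Gamma (c/2) * Gamma (c/2 + 1/2)) *
      (Real.sqrt (c - 1/2) * Gamma (c - 1/2)) / (Gamma c * s) by ring,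
    div_le_iff₀ (mul_pos hG4 hπ)]
  nlinarith [H2]
end

section
/- The function ξ(z) = z^{−1/2}·Γ(z + 1/2)/Γ(z) is non-decreasing on (0, ∞). -/
open Filter Finset Real Topology

noncomputable def hseq (n : ℕ) (z : ℝ) : ℝ :=
  ∏ j ∈ Finset.range (n + 1), Real.sqrt (1 - 1 / (2 * (z + j) + 1) ^ 2)

lemma prod_sqrt' (s : Finset ℕ) (f : ℕ → ℝ) (hf : ∀ j ∈ s, 0 ≤ f j) :
    ∏ j ∈ s, Real.sqrt (f j) = Real.sqrt (∏ j ∈ s, f j) := by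
  induction s using Finset.cons_induction with
  | empty => simp
  | cons a s ha ih =>
      rw [Finset.prod_cons, Finset.prod_cons, ih (fun j hj => hf j (Finset.mem_cons_of_mem hj)),
        ← Real.sqrt_mul (hf a (Finset.mem_cons_self a s))]

lemma hseq_eq {z : ℝ} (hz : 0 < z) (n : ℕ) :
    hseq n z = Real.sqrt ((z + n + 1) / z) *
      ∏ j ∈ Finset.range (n + 1), ((z + j) / (z + j + 1 / 2)) := by
  have hpos : ∀ j : ℕ, (0 : ℝ) < z + j := fun j => by positivity
  have hA : (0 : ℝ) < ∏ j ∈ Finset.range (n + 1), (z + j) :=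
    Finset.prod_pos fun j _ => hpos j
  have hB : (0 : ℝ) < ∏ j ∈ Finset.range (n + 1), (z + j + 1 / 2) :=
    Finset.prod_pos fun j _ => by positivity
  have hC : (0 : ℝ) < ∏ j ∈ Finset.range (n + 1), (z + j + 1) :=
    Finset.prod_pos fun j _ => by positivity
  have step1 : hseq n z = Real.sqrt (∏ j ∈ Finset.range (n + 1),
      ((z + j) * (z + j + 1) / (z + j + 1 / 2) ^ 2)) := by
    have hfn : ∀ j ∈ Finset.range (n + 1), (0:ℝ) ≤ 1 - 1 / (2 * (z + (j:ℕ)) + 1) ^ 2 := by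
      intro j _
      have h1 : (1 : ℝ) ≤ 2 * (z + j) + 1 := by have := (hpos j).le; linarith
      have h2 : (1 : ℝ) ≤ (2 * (z + j) + 1) ^ 2 := by nlinarith
      have h3 : 1 / (2 * (z + j) + 1) ^ 2 ≤ 1 := by
        rw [div_le_one (by positivity)]; exact h2
      linarith
    rw [hseq, prod_sqrt' _ _ hfn]
    congr 1
    refine Finset.prod_congr rfl fun j _ => ?_
    have h1 : (2 * (z + j) + 1) ≠ 0 := by positivity
    have h2 : (z + j + 1 / 2) ≠ 0 := by positivity
    field_simp
    ring
  have tele : ∏ j ∈ Finset.range (n + 1), (z + j + 1) =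
      (∏ j ∈ Finset.range (n + 1), (z + j)) * (z + n + 1) / z := by
    have h1 : ∏ j ∈ Finset.range (n + 2), (z + j) =
        (∏ j ∈ Finset.range (n + 1), (z + (j + 1 : ℕ))) * (z + (0 : ℕ)) :=
      Finset.prod_range_succ' (fun j => z + j) (n + 1)
    have h2 : ∏ j ∈ Finset.range (n + 2), (z + j) =
        (∏ j ∈ Finset.range (n + 1), (z + j)) * (z + (n + 1 : ℕ)) :=
      Finset.prod_range_succ (fun j => z + j) (n + 1)
    have h3 : (∏ j ∈ Finset.range (n + 1), (z + (j + 1 : ℕ))) =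
        ∏ j ∈ Finset.range (n + 1), (z + j + 1) := by
      refine Finset.prod_congr rfl fun j _ => by push_cast; ring
    rw [h3] at h1
    have h4 := h1.symm.trans h2
    push_cast at h4
    field_simp
    linarith
  rw [step1]
  rw [Finset.prod_div_distrib, Finset.prod_mul_distrib, Finset.prod_pow, tele]
  rw [Finset.prod_div_distrib]
  rw [show (∏ j ∈ Finset.range (n + 1), (z + j)) *
      ((∏ j ∈ Finset.range (n + 1), (z + j)) * (z + n + 1) / z) =
      (∏ j ∈ Finset.range (n + 1), (z + j)) ^ 2 * ((z + n + 1) / z) by ring]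
  rw [Real.sqrt_div' _ (by positivity), Real.sqrt_mul (by positivity),
    Real.sqrt_sq hA.le, Real.sqrt_sq hB.le]
  ring

lemma hseq_tendsto {z : ℝ} (hz : 0 < z) :
    Tendsto (fun n => hseq n z) atTop
      (𝓝 (z ^ (-(1 : ℝ) / 2) * Real.Gamma (z + 1 / 2) / Real.Gamma z)) := by
  have hG : Real.Gamma z ≠ 0 := (Real.Gamma_pos_of_pos hz).ne'
  have t1 : Tendsto (fun n : ℕ => z ^ (-(1 : ℝ) / 2) * Real.GammaSeq (z + 1 / 2) n /
      Real.GammaSeq z n) atTop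
      (𝓝 (z ^ (-(1 : ℝ) / 2) * Real.Gamma (z + 1 / 2) / Real.Gamma z)) :=
    (tendsto_const_nhds.mul (Real.GammaSeq_tendsto_Gamma (z + 1 / 2))).div
      (Real.GammaSeq_tendsto_Gamma z) hG
  have t2 : Tendsto (fun n : ℕ => Real.sqrt ((z + n + 1) / n)) atTop (𝓝 1) := by
    have h0 : Tendsto (fun n : ℕ => (z + n + 1) / n) atTop (𝓝 1) := by
      have : Tendsto (fun n : ℕ => (z + 1) / n + 1) atTop (𝓝 (0 + 1)) :=
        (tendsto_const_div_atTop_nhds_zero_nat (z + 1)).add tendsto_const_nhds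
      rw [zero_add] at this
      refine this.congr' ?_
      filter_upwards [eventually_ge_atTop 1] with n hn
      have hn' : (n : ℝ) ≠ 0 := by positivity
      field_simp
      ring
    have h1 := (Real.continuous_sqrt.tendsto 1).comp h0
    simpa only [Function.comp_def, Real.sqrt_one] using h1
  have key : (fun n : ℕ => z ^ (-(1 : ℝ) / 2) * Real.GammaSeq (z + 1 / 2) n /
      Real.GammaSeq z n * Real.sqrt ((z + n + 1) / n)) =ᶠ[atTop] fun n => hseq n z := by
    filter_upwards [eventually_ge_atTop 1] with n hn
    have hn0 : (0 : ℝ) < n := by exact_mod_cast hn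
    have hA : (0 : ℝ) < ∏ j ∈ Finset.range (n + 1), (z + j) :=
      Finset.prod_pos fun j _ => by positivity
    have hB : (0 : ℝ) < ∏ j ∈ Finset.range (n + 1), (z + j + 1 / 2) :=
      Finset.prod_pos fun j _ => by positivity
    have hfact : (0 : ℝ) < (n.factorial : ℝ) := by positivity
    have hnz : (0 : ℝ) < (n : ℝ) ^ z := Real.rpow_pos_of_pos hn0 z
    have hB' : (∏ j ∈ Finset.range (n + 1), (z + 1 / 2 + j)) =
        ∏ j ∈ Finset.range (n + 1), (z + j + 1 / 2) :=
      Finset.prod_congr rfl fun j _ => by ring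
    rw [hseq_eq hz, Real.GammaSeq, Real.GammaSeq, hB']
    rw [Real.rpow_add hn0 z (1 / 2)]
    rw [show (-(1 : ℝ) / 2) = -(1 / 2 : ℝ) by norm_num, Real.rpow_neg hz.le,
      ← Real.sqrt_eq_rpow, ← Real.sqrt_eq_rpow]
    have hzn1 : (0 : ℝ) ≤ z + n + 1 := by positivity
    rw [Real.sqrt_div hzn1 (n : ℝ), Real.sqrt_div hzn1 z]
    have hsz : Real.sqrt z ≠ 0 := by positivity
    have hsn : Real.sqrt n ≠ 0 := by positivity
    field_simp
    rw [← Finset.prod_mul_distrib]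
    refine Finset.prod_congr rfl fun j _ => ?_
    have hj : (2 * (z + j) + 1 : ℝ) ≠ 0 := by positivity
    field_simp
  have h2 := t1.mul t2
  rw [mul_one] at h2
  exact h2.congr' key

lemma hseq_mono (n : ℕ) : MonotoneOn (hseq n) (Set.Ioi (0 : ℝ)) := by
  intro x hx y hy hxy
  simp only [Set.mem_Ioi] at hx hy
  refine Finset.prod_le_prod (fun j _ => Real.sqrt_nonneg _) (fun j _ => ?_)
  apply Real.sqrt_le_sqrt
  have h1 : (0 : ℝ) < 2 * (x + j) + 1 := by positivity
  gcongr

theorem xi_monotone :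
    MonotoneOn (fun z : ℝ => z ^ (-(1 : ℝ) / 2) * Real.Gamma (z + 1 / 2) / Real.Gamma z)
      (Set.Ioi (0 : ℝ)) := by
  intro x hx y hy hxy
  exact le_of_tendsto_of_tendsto' (hseq_tendsto hx) (hseq_tendsto hy)
    (fun n => hseq_mono n hx hy hxy)
end

section
/- For probability measures P and Q on a measurable space with P absolutely continuous with respect to Q, the relative entropy satisfies D(P‖Q) ≤ log(1 + χ²(P,Q)), where χ²(P,Q) = ∫ (dP/dQ − 1)² dQ is the chi-squared divergence. -/
open MeasureTheory

theorem kl_le_log_one_add_chiSq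
    {α : Type*} [MeasurableSpace α] (P Q : Measure α)
    [IsProbabilityMeasure P] [IsProbabilityMeasure Q] (hPQ : P ≪ Q)
    (hIntP : Integrable (fun x => Real.log ((P.rnDeriv Q x).toReal)) P)
    (hIntQ : Integrable (fun x => ((P.rnDeriv Q x).toReal - 1) ^ 2) Q) :
    ∫ x, Real.log ((P.rnDeriv Q x).toReal) ∂P ≤
      Real.log (1 + ∫ x, ((P.rnDeriv Q x).toReal - 1) ^ 2 ∂Q) := by
  set f : α → ℝ := fun x => (P.rnDeriv Q x).toReal with hf
  have hfQ_int : Integrable f Q := Measure.integrable_toReal_rnDeriv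
  have hfQ : ∫ x, f x ∂Q = 1 := by
    rw [Measure.integral_toReal_rnDeriv hPQ, probReal_univ]
  have hg_int : Integrable (fun x => 2 * f x - 1) Q :=
    (hfQ_int.const_mul 2).sub (integrable_const 1)
  have hf2_int : Integrable (fun x => f x ^ 2) Q := by
    have : (fun x => f x ^ 2) = fun x => (f x - 1) ^ 2 + (2 * f x - 1) := by
      funext x; ring
    rw [this]
    exact hIntQ.add hg_int
  have hkey : ∫ x, f x ^ 2 ∂Q = 1 + ∫ x, (f x - 1) ^ 2 ∂Q := by
    have h1 : (fun x => f x ^ 2) = fun x => (f x - 1) ^ 2 + (2 * f x - 1) := by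
      funext x; ring
    have h2 : ∫ x, (2 * f x - 1) ∂Q = 1 := by
      rw [integral_sub (hfQ_int.const_mul 2) (integrable_const 1), integral_const_mul, hfQ]
      simp [measure_univ]; norm_num
    rw [h1, integral_add hIntQ hg_int, h2]
    ring
  set c : ℝ := ∫ x, f x ^ 2 ∂Q with hc
  have hchi_nonneg : 0 ≤ ∫ x, (f x - 1) ^ 2 ∂Q :=
    integral_nonneg fun x => sq_nonneg _
  have hc1 : (1 : ℝ) ≤ c := by rw [hkey]; linarith
  have hc0 : 0 < c := lt_of_lt_of_le one_pos hc1
  have hfP : ∫ x, f x ∂P = c := by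
    rw [hc, ← MeasureTheory.integral_rnDeriv_smul hPQ (f := f)]
    congr 1; funext x; simp [hf, smul_eq_mul, sq]
  have hfP_int : Integrable f P := by
    rw [← MeasureTheory.integrable_rnDeriv_smul_iff hPQ]
    have : (fun x => (P.rnDeriv Q x).toReal • f x) = fun x => f x ^ 2 := by
      funext x; simp [hf, smul_eq_mul, sq]
    rw [this]; exact hf2_int
  have hpt : ∀ᵐ x ∂P, Real.log (f x) ≤ f x / c - 1 + Real.log c := by
    filter_upwards [Measure.rnDeriv_pos hPQ,
      hPQ.ae_le (Measure.rnDeriv_lt_top P Q)] with x hpos hlt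
    have hfx : 0 < f x := ENNReal.toReal_pos hpos.ne' hlt.ne
    have h := Real.log_le_sub_one_of_pos (div_pos hfx hc0)
    rw [Real.log_div hfx.ne' hc0.ne'] at h
    linarith
  have hrhs_int1 : Integrable (fun x => f x / c - 1) P :=
    (hfP_int.div_const c).sub (integrable_const 1)
  calc ∫ x, Real.log (f x) ∂P ≤ ∫ x, (f x / c - 1 + Real.log c) ∂P :=
        integral_mono_ae hIntP (hrhs_int1.add (integrable_const _)) hpt
    _ = Real.log c := by
        rw [integral_add hrhs_int1 (integrable_const _),
          integral_sub (hfP_int.div_const c) (integrable_const 1), integral_div, hfP]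
        simp [measure_univ, div_self hc0.ne']
    _ = Real.log (1 + ∫ x, (f x - 1) ^ 2 ∂Q) := by rw [hkey]
end

section
/- For probability measures P, Q with P ≪ Q, D(P‖Q) ≤ κ·√(χ²(P,Q)) where κ = sup_{x>0} log(1+x)/√x. -/
open MeasureTheory

lemma log_one_add_le_sqrt {x : ℝ} (hx : 0 ≤ x) :
    Real.log (1 + x) ≤ Real.sqrt x := by
  have ht : 0 ≤ Real.sqrt x := Real.sqrt_nonneg x
  have hsq : Real.sqrt x ^ 2 = x := Real.sq_sqrt hx
  have hexp : 1 + x ≤ Real.exp (Real.sqrt x) := by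
    have h4 := Real.sum_le_exp_of_nonneg ht 4
    have : ∑ i ∈ Finset.range 4, Real.sqrt x ^ i / i.factorial
        = 1 + Real.sqrt x + Real.sqrt x ^ 2 / 2 + Real.sqrt x ^ 3 / 6 := by
      simp [Finset.sum_range_succ, Nat.factorial]
    rw [this] at h4
    nlinarith [sq_nonneg (Real.sqrt x - 1), sq_nonneg (Real.sqrt x - 3)]
  calc Real.log (1 + x) ≤ Real.log (Real.exp (Real.sqrt x)) :=
        Real.log_le_log (by linarith) hexp
    _ = Real.sqrt x := Real.log_exp _

theorem kl_le_kappa_sqrt_chiSq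
    {α : Type*} [MeasurableSpace α] (P Q : Measure α)
    [IsProbabilityMeasure P] [IsProbabilityMeasure Q] (hPQ : P ≪ Q)
    (hIntP : Integrable (fun x => Real.log ((P.rnDeriv Q x).toReal)) P)
    (hIntQ : Integrable (fun x => ((P.rnDeriv Q x).toReal - 1) ^ 2) Q)
    (κ : ℝ) (hκ : κ = sSup ((fun x : ℝ => Real.log (1 + x) / Real.sqrt x) '' Set.Ioi 0)) :
    ∫ x, Real.log ((P.rnDeriv Q x).toReal) ∂P ≤
      κ * Real.sqrt (∫ x, ((P.rnDeriv Q x).toReal - 1) ^ 2 ∂Q) := by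
  set f : α → ℝ := fun x => (P.rnDeriv Q x).toReal with hf
  set χ : ℝ := ∫ x, (f x - 1) ^ 2 ∂Q with hχ
  have hχ0 : 0 ≤ χ := integral_nonneg fun x => sq_nonneg _
  have hfQ : Integrable f Q := Measure.integrable_toReal_rnDeriv
  have hintf : ∫ x, f x ∂Q = 1 := by
    rw [hf, Measure.integral_toReal_rnDeriv hPQ]; simp
  -- ∫ f dP = ∫ f^2 dQ
  have hsq_int : Integrable (fun x => f x * f x) Q := by
    have : (fun x => f x * f x) = fun x => (f x - 1) ^ 2 + 2 * f x - 1 := by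
      funext x; ring
    rw [this]
    exact (hIntQ.add (hfQ.const_mul 2)).sub (integrable_const 1)
  have hIP : Integrable f P := by
    rw [← integrable_rnDeriv_smul_iff hPQ]
    simpa [smul_eq_mul] using hsq_int
  have hfP : ∫ x, f x ∂P = 1 + χ := by
    have h1 : ∫ x, f x ∂P = ∫ x, f x * f x ∂Q := by
      rw [← integral_rnDeriv_smul hPQ (f := f)]
      simp [hf, smul_eq_mul]
    have hI1 : Integrable (fun x => f x * f x - 2 * f x) Q := by
      exact hsq_int.sub (hfQ.const_mul 2)
    have hI2 : Integrable (fun x => 2 * f x) Q := by exact hfQ.const_mul 2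
    have h2 : ∫ x, (f x - 1) ^ 2 ∂Q
        = ∫ x, f x * f x ∂Q - 2 * ∫ x, f x ∂Q + 1 := by
      have : (fun x => (f x - 1) ^ 2) = fun x => (f x * f x - 2 * f x) + 1 := by
        funext x; ring
      rw [this, integral_add hI1 (integrable_const 1),
        integral_sub hsq_int hI2, integral_const_mul]
      simp
    rw [h1]
    rw [h2, hintf] at hχ
    linarith
  -- Jensen: ∫ log f dP ≤ log (1 + χ)
  have hc : (0:ℝ) < 1 + χ := by linarith
  have hjensen : ∫ x, Real.log (f x) ∂P ≤ Real.log (1 + χ) := by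
    have hae : ∀ᵐ x ∂P, Real.log (f x)
        ≤ Real.log (1 + χ) + f x / (1 + χ) - 1 := by
      filter_upwards [Measure.rnDeriv_pos hPQ, Measure.rnDeriv_lt_top P Q |>.filter_mono
        (hPQ.ae_le)] with x hx hx'
      have hfx : 0 < f x := ENNReal.toReal_pos hx.ne' hx'.ne
      have h := Real.log_le_sub_one_of_pos (div_pos hfx hc)
      rw [Real.log_div hfx.ne' hc.ne'] at h
      linarith
    have hJ1 : Integrable (fun x => Real.log (1 + χ) + f x / (1 + χ)) P := by
      exact (integrable_const _).add (hIP.div_const _)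
    have hJ2 : Integrable (fun x => Real.log (1 + χ) + f x / (1 + χ) - 1) P := by
      exact hJ1.sub (integrable_const 1)
    have hval : ∫ x, (Real.log (1 + χ) + f x / (1 + χ) - 1) ∂P = Real.log (1 + χ) := by
      rw [integral_sub hJ1 (integrable_const 1),
        integral_add (integrable_const _) (hIP.div_const _), integral_div, hfP]
      simp only [integral_const, measure_univ, ENNReal.toReal_one, probReal_univ, one_smul, smul_eq_mul]
      rw [div_self hc.ne']
      ring
    have := integral_mono_ae hIntP hJ2 hae
    rw [hval] at this
    exact this
  refine hjensen.trans ?_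
  -- log (1 + χ) ≤ κ * sqrt χ
  rcases eq_or_lt_of_le hχ0 with h0 | h0
  · rw [← h0]; simp
  · have hmem : Real.log (1 + χ) / Real.sqrt χ
        ∈ (fun x : ℝ => Real.log (1 + x) / Real.sqrt x) '' Set.Ioi 0 :=
      ⟨χ, h0, rfl⟩
    have hbdd : BddAbove ((fun x : ℝ => Real.log (1 + x) / Real.sqrt x) '' Set.Ioi 0) := by
      refine ⟨1, ?_⟩
      rintro _ ⟨x, hx, rfl⟩
      have hx' : (0:ℝ) < x := hx
      have hs : 0 < Real.sqrt x := Real.sqrt_pos.mpr hx'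
      rw [div_le_one hs]
      exact log_one_add_le_sqrt hx'.le
    have hle : Real.log (1 + χ) / Real.sqrt χ ≤ κ := hκ ▸ le_csSup hbdd hmem
    have hs : 0 < Real.sqrt χ := Real.sqrt_pos.mpr h0
    calc Real.log (1 + χ) = Real.log (1 + χ) / Real.sqrt χ * Real.sqrt χ := by
          field_simp
      _ ≤ κ * Real.sqrt χ := mul_le_mul_of_nonneg_right hle hs.le
end

section
/- For k = 1 and all real t > 0, 0 < r ≤ s: g_{1,0}(r/(t+s))·(t+s)^{−1/2} ≤ r/(2·t^{3/2}), where g_{1,0}(u) = (1−u)^{−1/2} − 1. -/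
theorem g_one_zero_bound (t r s : ℝ) (ht : 0 < t) (hr : 0 < r) (hrs : r ≤ s) :
    ((1 - r / (t + s)) ^ (-(1 : ℝ) / 2) - 1) * (t + s) ^ (-(1 : ℝ) / 2) ≤
      r / (2 * t ^ ((3 : ℝ) / 2)) := by
  have hts : 0 < t + s := by linarith
  have hu0 : 0 < r / (t + s) := div_pos hr hts
  have hu1 : r / (t + s) < 1 := (div_lt_one hts).mpr (by linarith)
  have hv : 0 < 1 - r / (t + s) := by linarith
  set a := Real.sqrt (1 - r / (t + s)) with ha_def
  set b := Real.sqrt (t + s) with hb_def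
  set c := Real.sqrt t with hc_def
  have ha : 0 < a := Real.sqrt_pos.mpr hv
  have hb : 0 < b := Real.sqrt_pos.mpr hts
  have hc : 0 < c := Real.sqrt_pos.mpr ht
  have ha2 : a ^ 2 = 1 - r / (t + s) := Real.sq_sqrt hv.le
  have hb2 : b ^ 2 = t + s := Real.sq_sqrt hts.le
  have hc2 : c ^ 2 = t := Real.sq_sqrt ht.le
  have hcb : c ≤ b := Real.sqrt_le_sqrt (by linarith)
  have ha1 : a ≤ 1 := by nlinarith
  -- rewrite rpow as sqrt
  have e1 : (1 - r / (t + s)) ^ (-(1 : ℝ) / 2) = a⁻¹ := by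
    rw [show (-(1 : ℝ) / 2) = -(1/2) by ring, Real.rpow_neg hv.le,
      ← Real.sqrt_eq_rpow]
  have e2 : (t + s) ^ (-(1 : ℝ) / 2) = b⁻¹ := by
    rw [show (-(1 : ℝ) / 2) = -(1/2) by ring, Real.rpow_neg hts.le,
      ← Real.sqrt_eq_rpow]
  have e3 : t ^ ((3 : ℝ) / 2) = t * c := by
    rw [show ((3 : ℝ) / 2) = 1 + 1/2 by ring, Real.rpow_add ht, Real.rpow_one,
      ← Real.sqrt_eq_rpow]
  rw [e1, e2, e3]
  have hinv : a⁻¹ - 1 = (1 - a) / a := by field_simp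
  have e4 : (1 - a) / a * b⁻¹ = (1 - a) / (a * b) := by
    field_simp
  rw [hinv, e4, div_le_div_iff₀ (by positivity) (by positivity)]
  -- now: (1 - a) * (2 * (t * c)) ≤ r * (a * b)
  have hr' : (1 - a ^ 2) * b ^ 2 = r := by
    rw [ha2, hb2]; field_simp; ring
  have hab2 : a ^ 2 * b ^ 2 = t + s - r := by
    rw [ha2, hb2]; field_simp
  have h1 : a * b ≥ c := by nlinarith [mul_pos ha hb]
  have st1 : 2 * (t * c) ≤ 2 * (c ^ 2 * b) := by nlinarith
  have st2 : 2 * (c ^ 2 * b) ≤ 2 * ((a * b) ^ 2 * b) := by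
    have h := mul_le_mul_of_nonneg_right (pow_le_pow_left₀ hc.le h1 2) hb.le
    linarith
  have st3 : 2 * ((a * b) ^ 2 * b) ≤ (1 + a) * a * b ^ 3 := by nlinarith
  have st4 : (1 - a) * (2 * (t * c)) ≤ (1 - a) * ((1 + a) * a * b ^ 3) :=
    mul_le_mul_of_nonneg_left (by linarith) (by linarith)
  have st5 : (1 - a) * ((1 + a) * a * b ^ 3) = r * (a * b) := by
    linear_combination (a * b) * hr'
  linarith
end
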